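/- Telescoping step in the A=D case: with the exponents a_j, b_j, c_j, d_j and factors ω_j, ω'_j as in the A=D theorem (where ω'_j are the corresponding factors for τ(w), with exponents a'_j, b'_j, c'_j, d'_j satisfying a'_{k+1−j} = −d_j, b'_{k+1−j} = 1 − a_j + b_j − d_j, c'_{k+1−j} = 1 − a_j + c_j − d_j, d'_{k+1−j} = −a_j), define Φ(j) := q^{a_j d_j} · [∏_{l=1−a_j+b_j−d_j}^{b_j−d_j}(A−Bq^l) · ∏_{l=1−a_j+c_j−d_j}^{c_j−d_j}(A−Cq^l)] / [∏_{l=1−a_j+b_j}^{b_j}(A−Bq^l) · ∏_{l=1−a_j+c_j}^{c_j}(A−Cq^l)] ∈ ℚ(A,B,C,q). Then for each 1 ≤ j ≤ k, Φ(j)/Φ(j−1) = ω_j / ω'_{k+1−j}, and consequently ∏_{j=1}^k ω_j = ∏_{j=1}^k ω'_j since Φ(0) = Φ(k) = 1. -/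

import Mathlib

/-- The six formal letters `e_{AB}, e_{AC}, e_{AD}, e_{BC}, e_{BD}, e_{CD}`. -/
inductive Letter : Type
  | AB | AC | AD | BC | BD | CD
  deriving DecidableEq

/-- A word is admissible if it does not begin with a letter `e_{Av}` and does not end
with a letter `e_{uD}`. -/
def AdmissibleWord (w : List Letter) : Prop :=
  (∀ u ∈ w.head?, u ∉ [Letter.AB, Letter.AC, Letter.AD]) ∧
  (∀ u ∈ w.getLast?, u ∉ [Letter.AD, Letter.BD, Letter.CD])

/-- The letter `e_{σ(v)σ(u)}` obtained from `e_{uv}` by the involution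
`σ = (A D)(B C)`. -/
def Letter.dual : Letter → Letter
  | .AB => .CD | .AC => .BD | .AD => .AD | .BC => .BC | .BD => .AC | .CD => .AB

/-- The anti-automorphism `τ` on words: reverse the word and dualize each letter. -/
def tauWord (w : List Letter) : List Letter := (w.map Letter.dual).reverse

/-- The field `ℚ(A, B, C, q)` of rational functions in four independent
indeterminates. -/
abbrev K4 : Type := FractionRing (MvPolynomial (Fin 4) ℚ)

noncomputable def vA : K4 := algebraMap (MvPolynomial (Fin 4) ℚ) K4 (MvPolynomial.X 0)
noncomputable def vB : K4 := algebraMap (MvPolynomial (Fin 4) ℚ) K4 (MvPolynomial.X 1)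
noncomputable def vC : K4 := algebraMap (MvPolynomial (Fin 4) ℚ) K4 (MvPolynomial.X 2)
noncomputable def vq : K4 := algebraMap (MvPolynomial (Fin 4) ℚ) K4 (MvPolynomial.X 3)

/-- `a_j = #{h ≤ j : u_h ∈ {BC,BD,CD}}` (`j` is 1-based). -/
def aexp (w : List Letter) (j : ℕ) : ℕ :=
  (w.take j).countP (fun u => u == Letter.BC || u == Letter.BD || u == Letter.CD)

/-- `b_j = #{h ≤ j : u_h ∉ {AC,AD}} + #{h > j : u_h = CD}` (`j` is 1-based). -/
def bexp (w : List Letter) (j : ℕ) : ℕ :=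
  (w.take j).countP (fun u => !(u == Letter.AC || u == Letter.AD))
    + (w.drop j).countP (fun u => u == Letter.CD)

/-- `c_j = #{h ≤ j : u_h ∉ {AB,AD}} + #{h > j : u_h = BD}` (`j` is 1-based). -/
def cexp (w : List Letter) (j : ℕ) : ℕ :=
  (w.take j).countP (fun u => !(u == Letter.AB || u == Letter.AD))
    + (w.drop j).countP (fun u => u == Letter.BD)

/-- `d_j = −#{h > j : u_h ∈ {AB,AC,BC}}` (`j` is 1-based). -/
def dexp (w : List Letter) (j : ℕ) : ℤ :=
  -(((w.drop j).countP
      (fun u => u == Letter.AB || u == Letter.AC || u == Letter.BC) : ℕ) : ℤ)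

/-- The factor `ω_j` of `L_q(w)` in the case `A = D` (`j : Fin w.length`, 0-based,
corresponding to the 1-based index `j+1`). -/
noncomputable def omegaF (w : List Letter) (j : Fin w.length) : K4 :=
  match w.get j with
  | .AB => vA / (vA - vA * vq ^ (aexp w (j + 1)))
      - vA / (vA - vB * vq ^ (bexp w (j + 1)))
  | .AC => vA / (vA - vA * vq ^ (aexp w (j + 1)))
      - vA / (vA - vC * vq ^ (cexp w (j + 1)))
  | .AD => vA / (vA - vA * vq ^ (aexp w (j + 1)))
      - vA / (vA - vA * vq ^ (dexp w (j + 1)))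
  | .BC => vA / (vA - vB * vq ^ (bexp w (j + 1)))
      - vA / (vA - vC * vq ^ (cexp w (j + 1)))
  | .BD => vA / (vA - vB * vq ^ (bexp w (j + 1)))
      - vA / (vA - vA * vq ^ (dexp w (j + 1)))
  | .CD => vA / (vA - vC * vq ^ (cexp w (j + 1)))
      - vA / (vA - vA * vq ^ (dexp w (j + 1)))

/-- `L_q(w) = ∏_j ω_j` in the degenerate case `A = D` (the single chain
`t_1 = ⋯ = t_k = A`). -/
noncomputable def LqAD (w : List Letter) : K4 :=
  ∏ j : Fin w.length, omegaF w j

/-- The partial product `∏_{i<len} (A − P q^{top−i}) = ∏_{l=top−len+1}^{top} (A − P q^l)`. -/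
noncomputable def pprod (P : K4) (top : ℤ) (len : ℕ) : K4 :=
  ∏ i ∈ Finset.range len, (vA - P * vq ^ (top - i))

/-- The telescoping quantity
`Φ(j) = q^{a_j d_j} ∏_{l=1−a_j+b_j−d_j}^{b_j−d_j}(A−Bq^l) ∏_{l=1−a_j+c_j−d_j}^{c_j−d_j}(A−Cq^l)
  / (∏_{l=1−a_j+b_j}^{b_j}(A−Bq^l) ∏_{l=1−a_j+c_j}^{c_j}(A−Cq^l))` (`j` is 1-based,
`0 ≤ j ≤ k`). -/
noncomputable def Phi (w : List Letter) (j : ℕ) : K4 :=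
  vq ^ ((aexp w j : ℤ) * dexp w j)
    * pprod vB ((bexp w j : ℤ) - dexp w j) (aexp w j)
    * pprod vC ((cexp w j : ℤ) - dexp w j) (aexp w j)
    / (pprod vB (bexp w j) (aexp w j) * pprod vC (cexp w j) (aexp w j))

/-!
Write `Φ(j) = q^{a d} F_B F_C` with
`F_P = ∏_{l=1-a+t-d}^{t-d} (A - P q^l) / ∏_{l=1-a+t}^{t} (A - P q^l)`, where `t = b` for `P = B`
and `t = c` for `P = C`. Reading the letter `u_j` moves the windows of these products by at most
one step, so `Φ(j)/Φ(j-1)` is a power `s` of `q` times two quotients `(A - X)/(A - s X)`.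
On the other side, `ω_j` and `ω'_{k+1-j}` are differences `A/(A - ·) - A/(A - ·)` whose
arguments are related by the same factor `s` (for the `A`-terms through
`A/(A - A s⁻¹) = 1 - A/(A - A s)`), and an identity valid in every field turns
`ω_j / ω'_{k+1-j}` into the same product.
Admissibility gives `a_{j-1} ≥ 1` before a letter `e_{Av}` and `d_{j-1} ≤ -1` before every
letter; together with the algebraic independence of `A, B, C, q` this keeps every denominator
nonzero. The product over `j` telescopes to `Φ(k)/Φ(0) = 1`.
-/

section FieldIdentities

variable {K : Type*} [Field K] {A s t X Y X' Y' : K}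

theorem sub_mul_ne_zero_of_ne_one (hA : A ≠ 0) (hs : s ≠ 1) : A - A * s ≠ 0 := by
  rw [← mul_one_sub]
  exact mul_ne_zero hA (sub_ne_zero.2 hs.symm)

theorem div_sub_div_eq_mul_sub_div (hX : A - X ≠ 0) (hY : A - Y ≠ 0) :
    A / (A - X) - A / (A - Y) = A * (X - Y) / ((A - X) * (A - Y)) := by
  field_simp
  ring

theorem div_sub_div_scale (hX : X' = s * X) (hY : Y' = s * Y) (hA : A ≠ 0) (hXY : X ≠ Y)
    (h₁ : A - X ≠ 0) (h₂ : A - Y ≠ 0) (h₃ : A - X' ≠ 0) (h₄ : A - Y' ≠ 0) :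
    (A / (A - X') - A / (A - Y')) / (A / (A - X) - A / (A - Y))
      = s * ((A - X) / (A - X')) * ((A - Y) / (A - Y')) := by
  subst hX hY
  rw [div_sub_div_eq_mul_sub_div h₃ h₄, div_sub_div_eq_mul_sub_div h₁ h₂]
  have := sub_ne_zero.2 hXY
  field_simp

theorem div_sub_div_scale_inv (hX : X' = s * X) (hY : Y' = s * Y) (hA : A ≠ 0) (hs : s ≠ 0)
    (hs₁ : s ≠ 1) (h₁ : A - X ≠ 0) (h₂ : A - X' ≠ 0) (h₃ : A - Y' ≠ 0) :
    (A / (A - Y') - A / (A - A * s)) / (A / (A - A * s⁻¹) - A / (A - X))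
      = s * ((A - Y) / (A - Y')) * ((A - X) / (A - X')) := by
  subst hX hY
  rw [div_sub_div_eq_mul_sub_div h₃ (sub_mul_ne_zero_of_ne_one hA hs₁),
    div_sub_div_eq_mul_sub_div (sub_mul_ne_zero_of_ne_one hA (inv_ne_one.2 hs₁)) h₁]
  have : A * s⁻¹ - X ≠ 0 := fun h => h₂ (by field_simp at h; linear_combination h)
  field_simp
  ring

theorem div_sub_div_scale_inv' (hX : X' = s * X) (hY : Y' = s * Y) (hA : A ≠ 0) (hs : s ≠ 0)
    (hs₁ : s ≠ 1) (h₁ : A - X ≠ 0) (h₂ : A - X' ≠ 0) (h₃ : A - Y' ≠ 0) :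
    (A / (A - A * s) - A / (A - Y')) / (A / (A - X) - A / (A - A * s⁻¹))
      = s * ((A - Y) / (A - Y')) * ((A - X) / (A - X')) := by
  rw [← div_sub_div_scale_inv hX hY hA hs hs₁ h₁ h₂ h₃, ← neg_sub (A / (A - Y')),
    ← neg_sub (A / (A - A * s⁻¹)), neg_div_neg_eq]

theorem div_sub_mul_inv_eq_one_sub (hA : A ≠ 0) (hs : s ≠ 0) (hs₁ : s ≠ 1) :
    A / (A - A * s⁻¹) = 1 - A / (A - A * s) := by
  have h₁ : 1 - s ≠ 0 := sub_ne_zero.2 hs₁.symm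
  have h₂ : s - 1 ≠ 0 := sub_ne_zero.2 hs₁
  rw [← mul_one_sub, ← mul_one_sub]
  field_simp
  ring

theorem div_sub_div_inv_eq_one (hA : A ≠ 0) (hs : s ≠ 0) (ht : t ≠ 0) (hs₁ : s ≠ 1)
    (ht₁ : t ≠ 1) (hst : s ≠ t) :
    (A / (A - A * s) - A / (A - A * t)) / (A / (A - A * t⁻¹) - A / (A - A * s⁻¹)) = 1 := by
  have h₁ := sub_mul_ne_zero_of_ne_one hA hs₁
  have h₂ := sub_mul_ne_zero_of_ne_one hA ht₁
  rw [div_sub_mul_inv_eq_one_sub hA ht ht₁, div_sub_mul_inv_eq_one_sub hA hs hs₁,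
    sub_sub_sub_cancel_left, div_self]
  rw [div_sub_div_eq_mul_sub_div h₁ h₂, ← mul_sub]
  exact div_ne_zero (mul_ne_zero hA (mul_ne_zero hA (sub_ne_zero.2 hst))) (mul_ne_zero h₁ h₂)

end FieldIdentities

section Genericity

open MvPolynomial

theorem vq_ne_zero : vq ≠ 0 :=
  (map_ne_zero_iff _ (IsFractionRing.injective _ K4)).2 (X_ne_zero 3)

theorem vA_ne_zero : vA ≠ 0 :=
  (map_ne_zero_iff _ (IsFractionRing.injective _ K4)).2 (X_ne_zero 0)

theorem algebraMap_X_mul_vq_zpow_inj {i j : Fin 4} {m n : ℤ}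
    (h : algebraMap (MvPolynomial (Fin 4) ℚ) K4 (X i) * vq ^ m
      = algebraMap (MvPolynomial (Fin 4) ℚ) K4 (X j) * vq ^ n) : i = j ∧ m = n := by
  obtain ⟨N, hm, hn⟩ : ∃ N : ℤ, 0 ≤ m + N ∧ 0 ≤ n + N :=
    ⟨m.natAbs + n.natAbs, by omega, by omega⟩
  obtain ⟨s, hs⟩ := Int.eq_ofNat_of_zero_le hm
  obtain ⟨t, ht⟩ := Int.eq_ofNat_of_zero_le hn
  have hK : algebraMap (MvPolynomial (Fin 4) ℚ) K4 (X i * X 3 ^ s)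
      = algebraMap (MvPolynomial (Fin 4) ℚ) K4 (X j * X 3 ^ t) := by
    rw [map_mul, map_mul, map_pow, map_pow, ← zpow_natCast, ← zpow_natCast, ← hs, ← ht]
    change _ * vq ^ _ = _ * vq ^ _
    rw [zpow_add₀ vq_ne_zero, zpow_add₀ vq_ne_zero, ← mul_assoc, ← mul_assoc, h]
  have hpoly := IsFractionRing.injective _ K4 hK
  have hst : s = t := by
    have := congrArg totalDegree hpoly
    rwa [totalDegree_mul_of_isDomain (X_ne_zero _) (pow_ne_zero _ (X_ne_zero _)),
      totalDegree_mul_of_isDomain (X_ne_zero _) (pow_ne_zero _ (X_ne_zero _)),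
      totalDegree_X, totalDegree_X, totalDegree_X_pow, totalDegree_X_pow, add_right_inj] at this
  subst hst
  exact ⟨X_injective (mul_right_cancel₀ (pow_ne_zero _ (X_ne_zero _)) hpoly), by omega⟩

theorem vA_sub_vB_mul_ne_zero (n : ℤ) : vA - vB * vq ^ n ≠ 0 := fun h =>
  absurd (algebraMap_X_mul_vq_zpow_inj (i := 0) (j := 1) (m := 0) (n := n)
    (by rw [zpow_zero, mul_one]; exact sub_eq_zero.1 h)).1 (by decide)

theorem vA_sub_vC_mul_ne_zero (n : ℤ) : vA - vC * vq ^ n ≠ 0 := fun h =>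
  absurd (algebraMap_X_mul_vq_zpow_inj (i := 0) (j := 2) (m := 0) (n := n)
    (by rw [zpow_zero, mul_one]; exact sub_eq_zero.1 h)).1 (by decide)

theorem vB_mul_ne_vC_mul (m n : ℤ) : vB * vq ^ m ≠ vC * vq ^ n := fun h =>
  absurd (algebraMap_X_mul_vq_zpow_inj (i := 1) (j := 2) h).1 (by decide)

theorem vq_zpow_injective : Function.Injective (vq ^ · : ℤ → K4) := fun _ _ h =>
  (algebraMap_X_mul_vq_zpow_inj (i := 0) (j := 0) (congrArg (vA * ·) h)).2

theorem vq_zpow_ne_one {n : ℤ} (hn : n ≠ 0) : vq ^ n ≠ 1 := by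
  rw [← zpow_zero vq]
  exact vq_zpow_injective.ne hn

theorem mul_vq_zpow_eq (P : K4) {k m n : ℤ} (h : k = m + n) :
    P * vq ^ k = vq ^ m * (P * vq ^ n) := by
  rw [h, zpow_add₀ vq_ne_zero]
  ring

end Genericity

section Pochhammer

variable {P P' : K4} {n : ℕ} {t t' d : ℤ}

theorem pprod_ne_zero (hP : ∀ k : ℤ, vA - P * vq ^ k ≠ 0) : pprod P t n ≠ 0 :=
  Finset.prod_ne_zero_iff.2 fun _ _ => hP _

theorem pprod_succ : pprod P t (n + 1) = pprod P t n * (vA - P * vq ^ (t - n)) :=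
  Finset.prod_range_succ _ _

theorem pprod_succ_of_eq_add_one (h : t' = t + 1) :
    pprod P t' (n + 1) = (vA - P * vq ^ t') * pprod P t n := by
  rw [pprod, Finset.prod_range_succ', mul_comm, Nat.cast_zero, sub_zero]
  congr 1
  refine Finset.prod_congr rfl fun i _ => ?_
  rw [h]
  push_cast
  ring_nf

theorem pprod_mul_of_eq_add_one (h : t' = t + 1) :
    pprod P t' n * (vA - P * vq ^ (t' - n)) = (vA - P * vq ^ t') * pprod P t n := by
  rw [← pprod_succ, pprod_succ_of_eq_add_one h]

noncomputable def phiFactor (P : K4) (n : ℕ) (t d : ℤ) : K4 :=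
  pprod P (t - d) n / pprod P t n

noncomputable def phiExpr (P P' : K4) (n : ℕ) (t t' d : ℤ) : K4 :=
  vq ^ ((n : ℤ) * d) * phiFactor P n t d * phiFactor P' n t' d

theorem phiFactor_shift_td (hP : ∀ k : ℤ, vA - P * vq ^ k ≠ 0) :
    phiFactor P n (t + 1) (d + 1)
      = phiFactor P n t d * ((vA - P * vq ^ (t + 1 - n)) / (vA - P * vq ^ (t + 1))) := by
  have h := pprod_mul_of_eq_add_one (P := P) (n := n) (t' := t + 1) (t := t) rfl
  rw [phiFactor, phiFactor, show t + 1 - (d + 1) = t - d by ring]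
  field_simp [pprod_ne_zero hP, hP]
  linear_combination -h

theorem phiFactor_shift_d (hP : ∀ k : ℤ, vA - P * vq ^ k ≠ 0) :
    phiFactor P n t (d + 1)
      = phiFactor P n t d * ((vA - P * vq ^ (t - n - d)) / (vA - P * vq ^ (t - d))) := by
  have h := pprod_mul_of_eq_add_one (P := P) (n := n) (t' := t - d) (t := t - (d + 1)) (by ring)
  rw [phiFactor, phiFactor, show t - n - d = t - d - n by ring]
  field_simp [pprod_ne_zero hP, hP]
  linear_combination -h

theorem phiFactor_shift_ntd (hP : ∀ k : ℤ, vA - P * vq ^ k ≠ 0) :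
    phiFactor P (n + 1) (t + 1) (d + 1)
      = phiFactor P n t d * ((vA - P * vq ^ (t - n - d)) / (vA - P * vq ^ (t + 1))) := by
  rw [phiFactor, phiFactor, show t + 1 - (d + 1) = t - d by ring, pprod_succ,
    pprod_succ_of_eq_add_one rfl, show t - n - d = t - d - n by ring]
  field_simp [pprod_ne_zero hP, hP]

theorem phiFactor_shift_nt (hP : ∀ k : ℤ, vA - P * vq ^ k ≠ 0) :
    phiFactor P (n + 1) (t + 1) d
      = phiFactor P n t d * ((vA - P * vq ^ (t + 1 - d)) / (vA - P * vq ^ (t + 1))) := by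
  rw [phiFactor, phiFactor, pprod_succ_of_eq_add_one (t := t - d) (by ring),
    pprod_succ_of_eq_add_one rfl]
  field_simp [pprod_ne_zero hP, hP]

theorem phiFactor_shift_n (hP : ∀ k : ℤ, vA - P * vq ^ k ≠ 0) :
    phiFactor P (n + 1) t d
      = phiFactor P n t d * ((vA - P * vq ^ (t - n - d)) / (vA - P * vq ^ (t - n))) := by
  rw [phiFactor, phiFactor, pprod_succ, pprod_succ, show t - n - d = t - d - n by ring]
  field_simp [pprod_ne_zero hP, hP]

theorem phiExpr_ne_zero (hP : ∀ k : ℤ, vA - P * vq ^ k ≠ 0)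
    (hP' : ∀ k : ℤ, vA - P' * vq ^ k ≠ 0) : phiExpr P P' n t t' d ≠ 0 :=
  mul_ne_zero (mul_ne_zero (zpow_ne_zero _ vq_ne_zero)
    (div_ne_zero (pprod_ne_zero hP) (pprod_ne_zero hP)))
    (div_ne_zero (pprod_ne_zero hP') (pprod_ne_zero hP'))

theorem phiExpr_comm : phiExpr P P' n t t' d = phiExpr P' P n t' t d := by
  unfold phiExpr
  ring

theorem phiExpr_step_div_AB (hP : ∀ k : ℤ, vA - P * vq ^ k ≠ 0)
    (hP' : ∀ k : ℤ, vA - P' * vq ^ k ≠ 0) (hn : n ≠ 0) :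
    phiExpr P P' n (t + 1) t' (d + 1) / phiExpr P P' n t t' d
      = (vA / (vA - vA * vq ^ (n : ℤ)) - vA / (vA - P * vq ^ (t + 1)))
        / (vA / (vA - P' * vq ^ (t' - n - d)) - vA / (vA - vA * vq ^ (-(n : ℤ)))) := by
  have hstep : phiExpr P P' n (t + 1) t' (d + 1) = phiExpr P P' n t t' d * (vq ^ (n : ℤ)
      * ((vA - P * vq ^ (t + 1 - n)) / (vA - P * vq ^ (t + 1)))
      * ((vA - P' * vq ^ (t' - n - d)) / (vA - P' * vq ^ (t' - d)))) := by
    rw [phiExpr, phiExpr, phiFactor_shift_td hP, phiFactor_shift_d hP',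
      show (n : ℤ) * (d + 1) = n * d + n by ring, zpow_add₀ vq_ne_zero]
    ring
  rw [hstep, mul_div_cancel_left₀ _ (phiExpr_ne_zero hP hP'), zpow_neg,
    div_sub_div_scale_inv' (s := vq ^ (n : ℤ)) (X := P' * vq ^ (t' - n - d))
      (X' := P' * vq ^ (t' - d)) (Y := P * vq ^ (t + 1 - n)) (mul_vq_zpow_eq P' (by ring))
      (mul_vq_zpow_eq P (by ring)) vA_ne_zero (zpow_ne_zero _ vq_ne_zero)
      (vq_zpow_ne_one (by exact_mod_cast hn)) (hP' _) (hP' _) (hP _)]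

theorem phiExpr_step_div_BD (hP : ∀ k : ℤ, vA - P * vq ^ k ≠ 0)
    (hP' : ∀ k : ℤ, vA - P' * vq ^ k ≠ 0) (hd : d ≠ 0) :
    phiExpr P P' (n + 1) (t + 1) t' d / phiExpr P P' n t t' d
      = (vA / (vA - P * vq ^ (t + 1)) - vA / (vA - vA * vq ^ d))
        / (vA / (vA - vA * vq ^ (-d)) - vA / (vA - P' * vq ^ (t' - n - d))) := by
  have hstep : phiExpr P P' (n + 1) (t + 1) t' d = phiExpr P P' n t t' d * (vq ^ d
      * ((vA - P * vq ^ (t + 1 - d)) / (vA - P * vq ^ (t + 1)))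
      * ((vA - P' * vq ^ (t' - n - d)) / (vA - P' * vq ^ (t' - n)))) := by
    rw [phiExpr, phiExpr, phiFactor_shift_nt hP, phiFactor_shift_n hP',
      show ((n + 1 : ℕ) : ℤ) * d = n * d + d by push_cast; ring, zpow_add₀ vq_ne_zero]
    ring
  rw [hstep, mul_div_cancel_left₀ _ (phiExpr_ne_zero hP hP'), zpow_neg,
    div_sub_div_scale_inv (s := vq ^ d) (X := P' * vq ^ (t' - n - d))
      (X' := P' * vq ^ (t' - n)) (Y := P * vq ^ (t + 1 - d)) (mul_vq_zpow_eq P' (by ring))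
      (mul_vq_zpow_eq P (by ring)) vA_ne_zero (zpow_ne_zero _ vq_ne_zero)
      (vq_zpow_ne_one hd) (hP' _) (hP' _) (hP _)]

theorem phiExpr_step_div_BC (hP : ∀ k : ℤ, vA - P * vq ^ k ≠ 0)
    (hP' : ∀ k : ℤ, vA - P' * vq ^ k ≠ 0) (hPP' : ∀ k l : ℤ, P * vq ^ k ≠ P' * vq ^ l) :
    phiExpr P P' (n + 1) (t + 1) (t' + 1) (d + 1) / phiExpr P P' n t t' d
      = (vA / (vA - P * vq ^ (t + 1)) - vA / (vA - P' * vq ^ (t' + 1)))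
        / (vA / (vA - P * vq ^ (t - n - d)) - vA / (vA - P' * vq ^ (t' - n - d))) := by
  have hstep : phiExpr P P' (n + 1) (t + 1) (t' + 1) (d + 1) = phiExpr P P' n t t' d
      * (vq ^ (n + d + 1) * ((vA - P * vq ^ (t - n - d)) / (vA - P * vq ^ (t + 1)))
        * ((vA - P' * vq ^ (t' - n - d)) / (vA - P' * vq ^ (t' + 1)))) := by
    rw [phiExpr, phiExpr, phiFactor_shift_ntd hP, phiFactor_shift_ntd hP',
      show ((n + 1 : ℕ) : ℤ) * (d + 1) = n * d + (n + d + 1) by push_cast; ring,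
      zpow_add₀ vq_ne_zero]
    ring
  rw [hstep, mul_div_cancel_left₀ _ (phiExpr_ne_zero hP hP'),
    div_sub_div_scale (s := vq ^ (n + d + 1)) (X := P * vq ^ (t - n - d))
      (Y := P' * vq ^ (t' - n - d)) (mul_vq_zpow_eq P (by ring))
      (mul_vq_zpow_eq P' (by ring)) vA_ne_zero (hPP' _ _) (hP _) (hP' _) (hP _) (hP' _)]

theorem div_sub_div_vq_zpow_eq_one {m k : ℤ} (hm : m ≠ 0) (hk : k ≠ 0) (hmk : m ≠ k) :
    (vA / (vA - vA * vq ^ m) - vA / (vA - vA * vq ^ k))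
      / (vA / (vA - vA * vq ^ (-k)) - vA / (vA - vA * vq ^ (-m))) = 1 := by
  rw [zpow_neg, zpow_neg]
  exact div_sub_div_inv_eq_one vA_ne_zero (zpow_ne_zero _ vq_ne_zero)
    (zpow_ne_zero _ vq_ne_zero) (vq_zpow_ne_one hm) (vq_zpow_ne_one hk)
    (vq_zpow_injective.ne hmk)

end Pochhammer

def Letter.incA : Letter → ℕ
  | .BC | .BD | .CD => 1 | _ => 0

def Letter.incB : Letter → ℤ
  | .AB | .BC | .BD => 1 | _ => 0

def Letter.incC : Letter → ℤ
  | .AC | .BC | .CD => 1 | _ => 0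

def Letter.incD : Letter → ℤ
  | .AB | .AC | .BC => 1 | _ => 0

noncomputable def omegaExpr : Letter → ℤ → ℤ → ℤ → ℤ → K4
  | .AB, a, b, _, _ => vA / (vA - vA * vq ^ a) - vA / (vA - vB * vq ^ b)
  | .AC, a, _, c, _ => vA / (vA - vA * vq ^ a) - vA / (vA - vC * vq ^ c)
  | .AD, a, _, _, d => vA / (vA - vA * vq ^ a) - vA / (vA - vA * vq ^ d)
  | .BC, _, b, c, _ => vA / (vA - vB * vq ^ b) - vA / (vA - vC * vq ^ c)
  | .BD, _, b, _, d => vA / (vA - vB * vq ^ b) - vA / (vA - vA * vq ^ d)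
  | .CD, _, _, c, d => vA / (vA - vC * vq ^ c) - vA / (vA - vA * vq ^ d)

theorem phiExpr_step_div (u : Letter) {a : ℕ} {b c d : ℤ}
    (ha : u ∈ [Letter.AB, Letter.AC, Letter.AD] → a ≠ 0) (hd : d < 0) :
    phiExpr vB vC (a + u.incA) (b + u.incB) (c + u.incC) (d + u.incD) / phiExpr vB vC a b c d
      = omegaExpr u (a + u.incA : ℕ) (b + u.incB) (c + u.incC) (d + u.incD)
        / omegaExpr u.dual (-d) (b - a - d) (c - a - d) (-a) := by
  have hB := vA_sub_vB_mul_ne_zero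
  have hC := vA_sub_vC_mul_ne_zero
  cases u <;> simp only [Letter.incA, Letter.incB, Letter.incC, Letter.incD, Letter.dual,
    add_zero, Nat.cast_add, Nat.cast_one] at ha ⊢
  · exact phiExpr_step_div_AB hB hC (ha (by simp))
  · rw [phiExpr_comm, phiExpr_comm (P := vB)]
    exact phiExpr_step_div_AB hC hB (ha (by simp))
  · rw [div_self (phiExpr_ne_zero hB hC)]
    exact (div_sub_div_vq_zpow_eq_one (by exact_mod_cast ha (by simp)) hd.ne (by omega)).symm
  · exact phiExpr_step_div_BC hB hC vB_mul_ne_vC_mul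
  · exact phiExpr_step_div_BD hB hC hd.ne
  · rw [phiExpr_comm, phiExpr_comm (P := vB)]
    exact phiExpr_step_div_BD hC hB hd.ne

theorem Letter.countP_eq_sum_count (p : Letter → Bool) (l : List Letter) :
    l.countP p = (if p .AB then l.count .AB else 0) + (if p .AC then l.count .AC else 0)
      + (if p .AD then l.count .AD else 0) + (if p .BC then l.count .BC else 0)
      + (if p .BD then l.count .BD else 0) + (if p .CD then l.count .CD else 0) := by
  induction l with
  | nil => simp
  | cons u l ih =>
    rw [List.countP_cons, ih]
    cases u <;> simp <;> split_ifs <;> omega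

section WordExponents

variable {w : List Letter} {j : ℕ}

theorem aexp_succ (h : j < w.length) : aexp w (j + 1) = aexp w j + w[j].incA := by
  rw [aexp, aexp, List.take_succ_eq_append_getElem h, List.countP_append]
  cases w[j] <;> rfl

theorem bexp_succ (h : j < w.length) : (bexp w (j + 1) : ℤ) = bexp w j + w[j].incB := by
  rw [bexp, bexp, List.take_succ_eq_append_getElem h, List.drop_eq_getElem_cons h,
    List.countP_append, List.countP_cons]
  cases w[j] <;> simp [Letter.incB] <;> ring

theorem cexp_succ (h : j < w.length) : (cexp w (j + 1) : ℤ) = cexp w j + w[j].incC := by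
  rw [cexp, cexp, List.take_succ_eq_append_getElem h, List.drop_eq_getElem_cons h,
    List.countP_append, List.countP_cons]
  cases w[j] <;> simp [Letter.incC] <;> ring

theorem dexp_succ (h : j < w.length) : dexp w (j + 1) = dexp w j + w[j].incD := by
  rw [dexp, dexp, List.drop_eq_getElem_cons h, List.countP_cons]
  cases w[j] <;> simp [Letter.incD]

theorem countP_take_tauWord (p : Letter → Bool) (hj : j ≤ w.length) :
    ((tauWord w).take (w.length - j)).countP p = (w.drop j).countP (p ∘ Letter.dual) := by
  simp [tauWord, List.take_reverse, Nat.sub_sub_self hj, ← List.map_drop, List.countP_map]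

theorem countP_drop_tauWord (p : Letter → Bool) (hj : j ≤ w.length) :
    ((tauWord w).drop (w.length - j)).countP p = (w.take j).countP (p ∘ Letter.dual) := by
  simp [tauWord, List.drop_reverse, Nat.sub_sub_self hj, ← List.map_take, List.countP_map]

theorem aexp_tauWord (hj : j ≤ w.length) :
    (aexp (tauWord w) (w.length - j) : ℤ) = -dexp w j := by
  rw [aexp, dexp, neg_neg, countP_take_tauWord _ hj, Letter.countP_eq_sum_count, Letter.countP_eq_sum_count]
  simp [Letter.dual]

theorem bexp_tauWord (hj : j ≤ w.length) :
    (bexp (tauWord w) (w.length - j) : ℤ) = bexp w j - aexp w j - dexp w j := by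
  simp only [aexp, bexp, dexp, countP_take_tauWord _ hj, countP_drop_tauWord _ hj,
    Letter.countP_eq_sum_count]
  simp [Letter.dual]
  omega

theorem cexp_tauWord (hj : j ≤ w.length) :
    (cexp (tauWord w) (w.length - j) : ℤ) = cexp w j - aexp w j - dexp w j := by
  simp only [aexp, cexp, dexp, countP_take_tauWord _ hj, countP_drop_tauWord _ hj,
    Letter.countP_eq_sum_count]
  simp [Letter.dual]
  omega

theorem dexp_tauWord (hj : j ≤ w.length) : dexp (tauWord w) (w.length - j) = -aexp w j := by
  rw [aexp, dexp, countP_drop_tauWord _ hj, Letter.countP_eq_sum_count, Letter.countP_eq_sum_count]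
  simp [Letter.dual]

theorem aexp_ne_zero_of_admissible (hw : AdmissibleWord w) (h : j < w.length)
    (hA : w[j] ∈ [Letter.AB, Letter.AC, Letter.AD]) : aexp w j ≠ 0 := by
  obtain ⟨hhead, -⟩ := hw
  cases w with
  | nil => simp at h
  | cons u l =>
    cases j with
    | zero => exact absurd hA (hhead u rfl)
    | succ j =>
      have hu := hhead u rfl
      rw [aexp, List.take_succ_cons, List.countP_cons]
      cases u <;> simp_all

theorem dexp_neg_of_admissible (hw : AdmissibleWord w) (h : j < w.length) : dexp w j < 0 := by
  obtain ⟨-, hlast⟩ := hw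
  have hmem : w[w.length - 1] ∈ w.drop j :=
    List.mem_iff_getElem.2 ⟨w.length - 1 - j, by simp; omega, by simp; congr 1; omega⟩
  have hl := hlast _ (by rw [List.getLast?_eq_getElem?, List.getElem?_eq_getElem (by omega)]; rfl)
  have : 0 < (w.drop j).countP (fun u => u == Letter.AB || u == Letter.AC || u == Letter.BC) :=
    List.countP_pos_iff.2 ⟨_, hmem, by revert hl; cases w[w.length - 1] <;> simp⟩
  rw [dexp]
  omega

end WordExponents

theorem Finset.prod_range_div_of_ne_zero {G : Type*} [CommGroupWithZero G] (f : ℕ → G)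
    (hf : ∀ i, f i ≠ 0) (n : ℕ) : ∏ i ∈ Finset.range n, f (i + 1) / f i = f n / f 0 := by
  simpa using congrArg Units.val (Finset.prod_range_div (fun i => Units.mk0 (f i) (hf i)) n)

theorem Phi_eq_phiExpr (w : List Letter) (j : ℕ) :
    Phi w j = phiExpr vB vC (aexp w j) (bexp w j) (cexp w j) (dexp w j) := by
  rw [Phi, phiExpr, phiFactor, phiFactor]
  ring

theorem Phi_ne_zero (w : List Letter) (j : ℕ) : Phi w j ≠ 0 := by
  rw [Phi_eq_phiExpr]
  exact phiExpr_ne_zero vA_sub_vB_mul_ne_zero vA_sub_vC_mul_ne_zero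

theorem Phi_zero (w : List Letter) : Phi w 0 = 1 := by
  simp [Phi, aexp, pprod]

theorem Phi_length (w : List Letter) : Phi w w.length = 1 := by
  rw [Phi, show dexp w w.length = 0 by simp [dexp]]
  simp only [mul_zero, zpow_zero, one_mul, sub_zero]
  exact div_self (mul_ne_zero (pprod_ne_zero vA_sub_vB_mul_ne_zero)
    (pprod_ne_zero vA_sub_vC_mul_ne_zero))

theorem omegaF_eq_omegaExpr (w : List Letter) (j : Fin w.length) :
    omegaF w j = omegaExpr (w.get j) (aexp w (j + 1)) (bexp w (j + 1)) (cexp w (j + 1))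
      (dexp w (j + 1)) := by
  rw [omegaF]
  cases w.get j <;> simp only [omegaExpr, zpow_natCast]

section Telescoping

variable {w : List Letter}

theorem tauWord_get_cast_rev (j : Fin w.length) (h : w.length = (tauWord w).length) :
    (tauWord w).get (Fin.cast h j.rev) = (w.get j).dual := by
  simp only [tauWord, List.get_eq_getElem, List.getElem_reverse, List.getElem_map,
    List.length_map]
  congr 2
  show w.length - 1 - (w.length - (j + 1)) = j
  omega

theorem omegaF_tauWord (j : Fin w.length) (h : w.length = (tauWord w).length) :
    omegaF (tauWord w) (Fin.cast h j.rev)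
      = omegaExpr (w.get j).dual (-dexp w j) (bexp w j - aexp w j - dexp w j)
          (cexp w j - aexp w j - dexp w j) (-aexp w j) := by
  have hj : (j : ℕ) ≤ w.length := j.isLt.le
  rw [omegaF_eq_omegaExpr, tauWord_get_cast_rev,
    show (Fin.cast h j.rev : ℕ) + 1 = w.length - j by rw [Fin.val_cast, Fin.val_rev]; omega,
    aexp_tauWord hj, bexp_tauWord hj, cexp_tauWord hj, dexp_tauWord hj]

theorem Phi_succ_div (hw : AdmissibleWord w) (j : Fin w.length)
    (h : w.length = (tauWord w).length) :
    Phi w (j + 1) / Phi w j = omegaF w j / omegaF (tauWord w) (Fin.cast h j.rev) := by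
  rw [omegaF_tauWord, omegaF_eq_omegaExpr, List.get_eq_getElem, Phi_eq_phiExpr, Phi_eq_phiExpr,
    aexp_succ j.isLt, bexp_succ j.isLt, cexp_succ j.isLt, dexp_succ j.isLt]
  exact phiExpr_step_div _ (aexp_ne_zero_of_admissible hw j.isLt)
    (dexp_neg_of_admissible hw j.isLt)

end Telescoping

/-- **The telescoping step in the `A = D` case** (proof of Theorem 4.8): for each
`1 ≤ j ≤ k`, `Φ(j)/Φ(j−1) = ω_j / ω'_{k+1−j}` (where `ω'` are the factors of
`L_q(τ(w))`), and consequently `∏_{j=1}^k ω_j = ∏_{j=1}^k ω'_j`. -/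
theorem Phi_telescoping (w : List Letter) (hadm : AdmissibleWord w) :
    (∀ j : Fin w.length,
      Phi w ((j : ℕ) + 1) / Phi w (j : ℕ)
        = omegaF w j
          / omegaF (tauWord w)
              (Fin.cast (show w.length = (tauWord w).length by simp [tauWord])
                j.rev)) ∧
    (∏ j : Fin w.length, omegaF w j)
      = ∏ j : Fin (tauWord w).length, omegaF (tauWord w) j := by
  have hlen : w.length = (tauWord w).length := by simp [tauWord]
  have hstep := fun j => Phi_succ_div hadm j hlen
  refine ⟨hstep, ?_⟩
  have hω : ∀ j : Fin w.length, omegaF w j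
      = Phi w (j + 1) / Phi w j * omegaF (tauWord w) (Fin.cast hlen j.rev) := fun j => by
    have hne := div_ne_zero (Phi_ne_zero w (j + 1)) (Phi_ne_zero w j)
    rw [hstep j] at hne ⊢
    exact (div_mul_cancel₀ _ (div_ne_zero_iff.1 hne).2).symm
  calc ∏ j : Fin w.length, omegaF w j
      = (∏ j : Fin w.length, Phi w (j + 1) / Phi w j)
          * ∏ j : Fin w.length, omegaF (tauWord w) (Fin.cast hlen j.rev) := by
        rw [← Finset.prod_mul_distrib]
        exact Finset.prod_congr rfl fun j _ => hω j
    _ = ∏ j : Fin (tauWord w).length, omegaF (tauWord w) j := by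
        rw [Fin.prod_univ_eq_prod_range (fun i => Phi w (i + 1) / Phi w i),
          Finset.prod_range_div_of_ne_zero _ (Phi_ne_zero w), Phi_zero, Phi_length, div_one,
          one_mul]
        exact Fintype.prod_equiv (Fin.revPerm.trans (finCongr hlen)) _ _ fun _ => rfl
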